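/- arXiv:1910.06960 — 4 statements merged into one kernel-verified Lean document; each statement's English description precedes it below -/
import Mathlib

section
/- Large angular separation forces different quantization: let z, w ∈ ℂ be off-axis (z.re ≠ 0, z.im ≠ 0, w.re ≠ 0, w.im ≠ 0). If the circular distance modulo 2π between arg z and arg w is strictly greater than π/2, then q(z) ≠ q(w). -/
/-!
If `q z = q w`, the real parts and the imaginary parts of `z` and `w` have equal signs, so the
Euclidean inner product `z.re * w.re + z.im * w.im = ‖z‖ * ‖w‖ * cos (arg z - arg w)` is
nonnegative. A circular distance above `π / 2` between the arguments makes that cosine negative.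
-/

/-- 1-bit quantization of a complex number: signs of the real and imaginary parts. -/
noncomputable def q (z : ℂ) : ℝ × ℝ := (Real.sign z.re, Real.sign z.im)

/-- Circular distance modulo `2π`. -/
noncomputable def circDist (a b : ℝ) : ℝ := ⨅ j : ℤ, |a - b - 2 * Real.pi * j|

open Real

lemma Real.mul_nonneg_of_sign_eq {x y : ℝ} (h : Real.sign x = Real.sign y) : 0 ≤ x * y := by
  rcases lt_trichotomy x 0 with hx | rfl | hx <;> rcases lt_trichotomy y 0 with hy | rfl | hy <;>
    simp_all [Real.sign_of_neg, Real.sign_of_pos, Real.sign_zero] <;> nlinarith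

lemma re_mul_re_add_im_mul_im_nonneg_of_q_eq {z w : ℂ} (h : q z = q w) :
    0 ≤ z.re * w.re + z.im * w.im :=
  add_nonneg (Real.mul_nonneg_of_sign_eq (congrArg Prod.fst h))
    (Real.mul_nonneg_of_sign_eq (congrArg Prod.snd h))

lemma Complex.re_mul_re_add_im_mul_im (z w : ℂ) :
    z.re * w.re + z.im * w.im = ‖z‖ * ‖w‖ * Real.cos (z.arg - w.arg) := by
  rw [Real.cos_sub, ← Complex.norm_mul_cos_arg z, ← Complex.norm_mul_cos_arg w,
    ← Complex.norm_mul_sin_arg z, ← Complex.norm_mul_sin_arg w]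
  ring

lemma circDist_le_abs_toReal (a b : ℝ) : circDist a b ≤ |((a - b : ℝ) : Angle).toReal| := by
  rw [Angle.toReal_coe, toIocMod, zsmul_eq_mul, mul_comm]
  exact ciInf_le ⟨0, by rintro _ ⟨j, rfl⟩; exact abs_nonneg _⟩ _

lemma cos_sub_neg_of_pi_div_two_lt_circDist {a b : ℝ} (h : π / 2 < circDist a b) :
    cos (a - b) < 0 := by
  rw [← Angle.cos_coe, Angle.cos_neg_iff_pi_div_two_lt_abs_toReal]
  exact h.trans_le (circDist_le_abs_toReal a b)

theorem quantization_ne_of_large_angle_general (z w : ℂ)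
    (hzre : z.re ≠ 0) (hwre : w.re ≠ 0)
    (h : circDist (Complex.arg z) (Complex.arg w) > Real.pi / 2) :
    q z ≠ q w := by
  intro hq
  have hz : 0 < ‖z‖ := norm_pos_iff.2 fun h0 => hzre (by simp [h0])
  have hw : 0 < ‖w‖ := norm_pos_iff.2 fun h0 => hwre (by simp [h0])
  have hinner := re_mul_re_add_im_mul_im_nonneg_of_q_eq hq
  rw [Complex.re_mul_re_add_im_mul_im] at hinner
  have hcos := cos_sub_neg_of_pi_div_two_lt_circDist h
  exact hinner.not_gt (mul_neg_of_pos_of_neg (mul_pos hz hw) hcos)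

/-- Large angular separation forces different quantization: if `z, w` are off-axis and the
circular distance mod `2π` between `arg z` and `arg w` exceeds `π/2`, then `q z ≠ q w`. -/
theorem quantization_ne_of_large_angle (z w : ℂ)
    (hzre : z.re ≠ 0) (hzim : z.im ≠ 0) (hwre : w.re ≠ 0) (hwim : w.im ≠ 0)
    (h : circDist (Complex.arg z) (Complex.arg w) > Real.pi / 2) :
    q z ≠ q w :=
  quantization_ne_of_large_angle_general z w hzre hwre h
end

section
/- Key rotation lemma: let z, w ∈ ℂ be nonzero and let β be the circular distance modulo 2π between arg z and arg w. Assume 0 < β ≤ π/2, let N be a natural number with N ≥ π/(2β), and set θ_k = k·π/(2N) for k = 1, …, N. Assume that for every k ∈ {1, …, N} both exp(I·θ_k)·z and exp(I·θ_k)·w are off-axis. Then there exists k ∈ {1, …, N} such that q(exp(I·θ_k)·z) ≠ q(exp(I·θ_k)·w), i.e., some rotation from the grid places z and w in different quadrants. -/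
def offAxis (z : ℂ) : Prop := z.re ≠ 0 ∧ z.im ≠ 0

open Complex
open scoped Real

theorem exists_circDist_eq (a b : ℝ) : ∃ j : ℤ, circDist a b = |a - b - 2 * π * j| := by
  set x := (a - b) / (2 * π)
  have h2π : 0 < 2 * π := by positivity
  have hscale (i : ℤ) : |a - b - 2 * π * i| = 2 * π * |x - i| := by
    rw [← abs_of_pos h2π, ← abs_mul, abs_of_pos h2π, mul_sub, mul_div_cancel₀ _ h2π.ne']
  refine ⟨round x, le_antisymm (ciInf_le ⟨0, ?_⟩ _) (le_ciInf fun i => ?_)⟩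
  · rintro _ ⟨i, rfl⟩
    exact abs_nonneg _
  · rw [hscale, hscale]
    exact mul_le_mul_of_nonneg_left (round_le x i) h2π.le

theorem exists_int_mul_between_grid_points {a h : ℝ} (ha : 0 < a) {N : ℕ} (hNh : N * h = a)
    (x : ℝ) :
    ∃ k ∈ Finset.Icc 1 N, ∃ m : ℤ, x + k * h ≤ m * a ∧ m * a ≤ x + (k + 1) * h := by
  have hh : 0 < h := pos_of_mul_pos_right (hNh ▸ ha) N.cast_nonneg
  set m := ⌈(x + h) / a⌉
  have hm₁ : x + h ≤ m * a := (div_le_iff₀ ha).1 (Int.le_ceil _)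
  have hm₂ : m * a < x + h + a := by
    have := Int.ceil_lt_add_one ((x + h) / a)
    rw [← sub_lt_iff_lt_add, lt_div_iff₀ ha] at this
    linarith
  set c := (m * a - x) / h
  have hc₁ : 1 ≤ c := by rw [le_div_iff₀ hh]; linarith
  have hc₂ : c < N + 1 := by rw [div_lt_iff₀ hh]; linarith
  refine ⟨⌊c⌋₊, Finset.mem_Icc.2 ⟨Nat.le_floor (by exact_mod_cast hc₁), ?_⟩,
    m, ?_, ?_⟩
  · exact Nat.lt_add_one_iff.1 <| (Nat.floor_lt' (by omega)).2 (by exact_mod_cast hc₂)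
  · have := (le_div_iff₀ hh).1 (Nat.floor_le (zero_le_one.trans hc₁))
    linarith
  · have := (div_lt_iff₀ hh).1 (Nat.lt_floor_add_one c)
    linarith

theorem q_I_mul (z : ℂ) : q (I * z) = (-(q z).2, (q z).1) := by
  simp [q, Real.sign_neg]

theorem q_I_mul_eq_iff {z w : ℂ} : q (I * z) = q (I * w) ↔ q z = q w := by
  simp only [q_I_mul, Prod.mk.injEq, neg_inj]
  exact and_comm.trans Prod.ext_iff.symm

theorem q_I_zpow_mul_eq_iff (m : ℤ) {z w : ℂ} :
    q (I ^ m * z) = q (I ^ m * w) ↔ q z = q w := by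
  have step (n : ℤ) (z w : ℂ) :
      q (I ^ (n + 1) * z) = q (I ^ (n + 1) * w) ↔ q (I ^ n * z) = q (I ^ n * w) := by
    rw [zpow_add_one₀ I_ne_zero, mul_comm _ I, mul_assoc, mul_assoc, q_I_mul_eq_iff]
  induction m using Int.induction_on with
  | zero => simp
  | succ n ih => exact (step n z w).trans ih
  | pred n ih => exact (sub_add_cancel (-(n : ℤ)) 1 ▸ step (-n - 1) z w).symm.trans ih

theorem exp_mul_I_eq_I_zpow_mul (x : ℝ) (m : ℤ) :
    exp (x * I) = I ^ m * exp (↑(x - m * (π / 2)) * I) := by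
  have hI : I ^ m = exp (m * (π / 2 * I)) := by rw [exp_int_mul, exp_pi_div_two_mul_I]
  rw [hI, ← Complex.exp_add]
  push_cast
  ring_nf

theorem not_offAxis_mul_exp_int_mul_pi_div_two (a : ℝ) (m : ℤ) :
    ¬ offAxis (a * exp (↑(m * (π / 2)) * I)) := by
  rintro ⟨hre, him⟩
  rw [re_ofReal_mul, exp_ofReal_mul_I_re] at hre
  rw [im_ofReal_mul, exp_ofReal_mul_I_im] at him
  have h : Real.sin (2 * (m * (π / 2))) = 0 := by
    rw [show 2 * (m * (π / 2)) = m * π by ring, Real.sin_int_mul_pi]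
  rw [Real.sin_two_mul] at h
  exact mul_ne_zero (mul_ne_zero two_ne_zero (right_ne_zero_of_mul him))
    (right_ne_zero_of_mul hre) h

theorem q_mul_exp_ne_of_lt_of_lt {a b s t : ℝ} (ha : 0 < a) (hb : 0 < b) (m : ℤ)
    (hs : s < m * (π / 2)) (ht : m * (π / 2) < t) (hst : t < s + π) :
    q (a * exp (s * I)) ≠ q (b * exp (t * I)) := by
  rw [exp_mul_I_eq_I_zpow_mul s m, exp_mul_I_eq_I_zpow_mul t m, mul_left_comm,
    mul_left_comm (b : ℂ), Ne, q_I_zpow_mul_eq_iff]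
  have hz_im : a * Real.sin (s - m * (π / 2)) < 0 :=
    mul_neg_of_pos_of_neg ha (Real.sin_neg_of_neg_of_neg_pi_lt (by linarith) (by linarith))
  have hw_im : 0 < b * Real.sin (t - m * (π / 2)) :=
    mul_pos hb (Real.sin_pos_of_pos_of_lt_pi (by linarith) (by linarith))
  intro h
  have h_im := congrArg Prod.snd h
  simp only [q, im_ofReal_mul, exp_ofReal_mul_I_im] at h_im
  rw [Real.sign_of_neg hz_im, Real.sign_of_pos hw_im] at h_im
  norm_num at h_im

theorem exp_I_mul_mul_eq (θ : ℝ) (z : ℂ) :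
    exp (I * θ) * z = ‖z‖ * exp (↑(θ + arg z) * I) := by
  conv_lhs => rw [← norm_mul_exp_arg_mul_I z]
  push_cast
  rw [mul_comm I, add_mul, Complex.exp_add]
  ring

theorem exists_rotation_q_ne_of_arg_eq_add {z w : ℂ} (hz : z ≠ 0) (hw : w ≠ 0) {β : ℝ}
    (hβπ : β < π) {N : ℕ} (hN : 0 < N) (hstep : π / (2 * N) ≤ β) (j : ℤ)
    (harg : arg w = arg z + β + 2 * π * j)
    (hoff : ∀ k ∈ Finset.Icc 1 N,
      offAxis (exp (I * ((k * π / (2 * N) : ℝ) : ℂ)) * z) ∧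
      offAxis (exp (I * ((k * π / (2 * N) : ℝ) : ℂ)) * w)) :
    ∃ k ∈ Finset.Icc 1 N,
      q (exp (I * ((k * π / (2 * N) : ℝ) : ℂ)) * z) ≠
      q (exp (I * ((k * π / (2 * N) : ℝ) : ℂ)) * w) := by
  obtain ⟨k, hk, m, hkm, hmk⟩ :=
    exists_int_mul_between_grid_points (h := π / (2 * N)) (by positivity : 0 < π / 2)
      (by field_simp) (arg z)
  set s := k * π / (2 * N) + arg z with hs
  have hZ : exp (I * ((k * π / (2 * N) : ℝ) : ℂ)) * z = ‖z‖ * exp (s * I) :=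
    exp_I_mul_mul_eq _ z
  have hW : exp (I * ((k * π / (2 * N) : ℝ) : ℂ)) * w = ‖w‖ * exp (↑(s + β) * I) := by
    rw [exp_I_mul_mul_eq, harg, ← exp_periodic.int_mul j (↑(s + β) * I)]
    congr 2
    push_cast [hs]
    ring
  obtain ⟨hoffZ, hoffW⟩ := hoff k hk
  refine ⟨k, hk, ?_⟩
  rw [hZ] at hoffZ ⊢
  rw [hW] at hoffW ⊢
  refine q_mul_exp_ne_of_lt_of_lt (norm_pos_iff.2 hz) (norm_pos_iff.2 hw) m ?_ ?_ ?_
  · refine lt_of_le_of_ne ?_ fun h => not_offAxis_mul_exp_int_mul_pi_div_two _ m (h ▸ hoffZ)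
    rw [hs, mul_div_assoc]
    linarith
  · refine lt_of_le_of_ne ?_ fun h => not_offAxis_mul_exp_int_mul_pi_div_two _ m (h ▸ hoffW)
    have : s + π / (2 * N) = arg z + (k + 1) * (π / (2 * N)) := by ring
    linarith
  · linarith

/-- Key rotation lemma: if `z, w ≠ 0` have circular angular distance `β` with `0 < β ≤ π/2`,
and `N ≥ π/(2β)`, then some rotation `exp(I·k·π/(2N))`, `1 ≤ k ≤ N`, places `z` and `w` in
different quadrants (assuming all rotated points are off-axis). -/
theorem rotation_separates (z w : ℂ) (hz : z ≠ 0) (hw : w ≠ 0) (β : ℝ)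
    (hβ : β = circDist (Complex.arg z) (Complex.arg w))
    (hβ0 : 0 < β) (hβπ : β ≤ Real.pi / 2)
    (N : ℕ) (hN : Real.pi / (2 * β) ≤ (N : ℝ))
    (hoff : ∀ k ∈ Finset.Icc 1 N,
      offAxis (Complex.exp (Complex.I * (((k : ℝ) * Real.pi / (2 * N) : ℝ) : ℂ)) * z) ∧
      offAxis (Complex.exp (Complex.I * (((k : ℝ) * Real.pi / (2 * N) : ℝ) : ℂ)) * w)) :
    ∃ k ∈ Finset.Icc 1 N,
      q (Complex.exp (Complex.I * (((k : ℝ) * Real.pi / (2 * N) : ℝ) : ℂ)) * z) ≠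
      q (Complex.exp (Complex.I * (((k : ℝ) * Real.pi / (2 * N) : ℝ) : ℂ)) * w) := by
  have hN0 : 0 < N := by exact_mod_cast (by positivity : 0 < π / (2 * β)).trans_le hN
  have hstep : π / (2 * N) ≤ β := by
    rw [div_le_iff₀ (by positivity)] at hN ⊢
    linarith
  have hβlt : β < π := by linarith [Real.pi_pos]
  obtain ⟨j, hj⟩ := exists_circDist_eq (arg z) (arg w)
  rcases abs_eq hβ0.le |>.1 (hβ.trans hj).symm with h | h
  · obtain ⟨k, hk, hne⟩ := exists_rotation_q_ne_of_arg_eq_add hw hz hβlt hN0 hstep j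
      (by linarith) fun k hk => (hoff k hk).symm
    exact ⟨k, hk, hne.symm⟩
  · exact exists_rotation_q_ne_of_arg_eq_add hz hw hβlt hN0 hstep (-j)
      (by push_cast; linarith) hoff
end

section
/- Pairwise distinguishability under the designed pilot (core of Proposition 1): let M, N ≥ 1, and let h_u, h_v : Fin M → ℂ have all entries nonzero. Let β = max over m ∈ Fin M of the circular distance modulo 2π between arg(h_u m) and arg(h_v m), and assume β > 0 and N ≥ π/(2β). Let x : Fin N → ℂ be a uniform-phase pilot sequence of length N, and assume that h_u m · x k and h_v m · x k are off-axis for all m ∈ Fin M and k ∈ Fin N. Then the quantized measurement matrices differ: there exist m ∈ Fin M and k ∈ Fin N with q(h_u m · x k) ≠ q(h_v m · x k). -/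
/-- A uniform-phase pilot sequence of length `N`: `x k = r k · exp(I·(k+1)·π/(2N))` with
positive magnitudes `r k`; its phases uniformly sample `(0, π/2]`. -/
def IsUniformPhasePilot (N : ℕ) (x : Fin N → ℂ) : Prop :=
  ∃ r : Fin N → ℝ, (∀ k, 0 < r k) ∧
    ∀ k : Fin N, x k = (r k : ℂ) *
      Complex.exp (Complex.I * (((((k : ℕ) : ℝ) + 1) * Real.pi / (2 * N) : ℝ) : ℂ))

/-!
Let `α, γ` be the phases of the two channels on an antenna attaining `β`, so that
`α ≡ γ + ρ (mod 2π)` with `δ ≤ ρ ≤ π`, where `δ = π/(2N)` is the pilot step. If every pair of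
samples `γ + (k+1)δ + ρ`, `γ + (k+1)δ` were quantized alike, the two would lie in one quadrant
for each `k`; since consecutive samples are `δ ≤ ρ` apart, the quadrants of consecutive pairs
overlap, so the whole arc from the first sample to the last shifted one, of length at least
`Nδ = π/2`, would lie in a single quadrant. Quadrants are tracked by the parities of `⌊t/π⌋` and
`⌊(t + π/2)/π⌋`, which the signs of `sin t` and `cos t` determine.
-/

open Complex
open scoped Real

noncomputable def halfTurns (t : ℝ) : ℤ := ⌊t / π⌋

theorem halfTurns_mono : Monotone halfTurns :=
  fun _ _ h => Int.floor_mono (div_le_div_of_nonneg_right h Real.pi_pos.le)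

theorem halfTurns_add_int_mul_pi (t : ℝ) (j : ℤ) : halfTurns (t + j * π) = halfTurns t + j := by
  rw [halfTurns, add_div, mul_div_cancel_right₀ _ Real.pi_ne_zero, Int.floor_add_intCast]
  rfl

theorem halfTurns_add_pi (t : ℝ) : halfTurns (t + π) = halfTurns t + 1 := by
  simpa using halfTurns_add_int_mul_pi t 1

theorem halfTurns_eq_of_even_iff {s t : ℝ} (hst : s ≤ t) (hts : t ≤ s + π)
    (h : Even (halfTurns t) ↔ Even (halfTurns s)) : halfTurns t = halfTurns s := by
  have h₁ : halfTurns s ≤ halfTurns t := halfTurns_mono hst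
  have h₂ : halfTurns t ≤ halfTurns s + 1 := halfTurns_add_pi s ▸ halfTurns_mono hts
  rcases h₁.eq_or_lt with h₁ | h₁
  · exact h₁.symm
  · rw [show halfTurns t = halfTurns s + 1 by omega, Int.even_add_one] at h
    exact absurd h (by tauto)

theorem sin_pos_iff_even_halfTurns {t : ℝ} (h : Real.sin t ≠ 0) :
    0 < Real.sin t ↔ Even (halfTurns t) := by
  set n := halfTurns t
  set u := t - n * π
  have hu₀ : 0 ≤ u := by
    have := Int.floor_le (t / π)
    rw [le_div_iff₀ Real.pi_pos] at this
    simp only [u, n, halfTurns]; linarith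
  have huπ : u ≤ π := by
    have := Int.lt_floor_add_one (t / π)
    rw [div_lt_iff₀ Real.pi_pos] at this
    simp only [u, n, halfTurns]; linarith
  have hsin : Real.sin t = (-1) ^ n * Real.sin u := by
    rw [← Real.sin_add_int_mul_pi, sub_add_cancel]
  have hu : 0 < Real.sin u := by
    refine (Real.sin_nonneg_of_nonneg_of_le_pi hu₀ huπ).lt_of_ne' fun hu => h ?_
    rw [hsin, hu, mul_zero]
  rw [hsin]
  rcases n.even_or_odd with hn | hn
  · simp [hn, hn.neg_one_zpow, hu]
  · simp [Int.not_even_iff_odd.2 hn, hn.neg_one_zpow, hu.le]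

theorem cos_pos_iff_even_halfTurns {t : ℝ} (h : Real.cos t ≠ 0) :
    0 < Real.cos t ↔ Even (halfTurns (t + π / 2)) := by
  rw [← Real.sin_add_pi_div_two] at h ⊢
  exact sin_pos_iff_even_halfTurns h

theorem Real.sign_pos_iff {r : ℝ} : 0 < Real.sign r ↔ 0 < r := by
  rcases lt_trichotomy r 0 with h | rfl | h
  · simp [Real.sign_of_neg h, h.le.not_gt]
  · simp [Real.sign_zero]
  · simp [Real.sign_of_pos h, h]

/-- Modulo `2π`, `s` and `t` lie in the same quarter-turn `[kπ/2, (k+1)π/2)`. -/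
def SameQuadrant (s t : ℝ) : Prop :=
  (Even (halfTurns s) ↔ Even (halfTurns t)) ∧
    (Even (halfTurns (s + π / 2)) ↔ Even (halfTurns (t + π / 2)))

theorem SameQuadrant.symm {s t : ℝ} (h : SameQuadrant s t) : SameQuadrant t s :=
  ⟨h.1.symm, h.2.symm⟩

theorem sameQuadrant_add_two_pi_mul_iff {s t : ℝ} (j : ℤ) :
    SameQuadrant (s + 2 * π * j) t ↔ SameQuadrant s t := by
  have key (u : ℝ) : halfTurns (u + 2 * π * j) = halfTurns u + 2 * j := by
    rw [← halfTurns_add_int_mul_pi]; push_cast; ring_nf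
  simp only [SameQuadrant, key, add_right_comm s (2 * π * j), Int.even_add, even_two_mul,
    iff_true]

theorem Monotone.apply_add_eq_of_forall_apply_add_eq {β : Type*} [PartialOrder β] {f : ℝ → β}
    (hf : Monotone f) {a δ ρ : ℝ} (hδ : 0 ≤ δ) (hδρ : δ ≤ ρ) {N : ℕ}
    (h : ∀ k < N, f (a + (k + 1) * δ + ρ) = f (a + (k + 1) * δ)) {s : ℝ} (hs₀ : 0 ≤ s)
    (hs : s ≤ N * δ) : f (a + δ + s) = f (a + δ) := by
  induction N generalizing s with
  | zero => simp [le_antisymm (by simpa using hs) hs₀]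
  | succ N ih =>
    have ih' := fun {s} => ih (fun k hk => h k (by omega)) (s := s)
    by_cases hsN : s ≤ N * δ
    · exact ih' hs₀ hsN
    have hlast : f (a + (N + 1) * δ) = f (a + δ) := by
      rw [show a + (N + 1) * δ = a + δ + N * δ by ring]
      exact ih' (by positivity) le_rfl
    refine le_antisymm ?_ (hf (by linarith))
    calc f (a + δ + s) ≤ f (a + (N + 1) * δ + ρ) := hf (by push_cast at hs; nlinarith)
      _ = f (a + δ) := by rw [← hlast]; exact_mod_cast h N (by omega)

theorem exists_not_sameQuadrant_add {a δ ρ : ℝ} {N : ℕ} (hδ : 0 ≤ δ) (hδρ : δ ≤ ρ) (hρ : ρ ≤ π)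
    (hN : π / 2 ≤ N * δ) : ∃ k < N, ¬SameQuadrant (a + (k + 1) * δ + ρ) (a + (k + 1) * δ) := by
  by_contra! h
  -- otherwise `⌊t/π⌋` would take the same value at `a + δ`, `a + δ + π/2` and `a + δ + π`
  have h₁ := halfTurns_mono.apply_add_eq_of_forall_apply_add_eq hδ hδρ
    (fun k hk => halfTurns_eq_of_even_iff (by linarith) (by linarith) (h k hk).1)
    (by positivity) hN
  have hmono : Monotone fun t => halfTurns (t + π / 2) :=
    fun _ _ hst => halfTurns_mono (by linarith)
  have h₂ : halfTurns (a + δ + π / 2 + π / 2) = halfTurns (a + δ + π / 2) :=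
    hmono.apply_add_eq_of_forall_apply_add_eq hδ hδρ
      (fun k hk => halfTurns_eq_of_even_iff (by linarith) (by linarith) (h k hk).2)
      (by positivity) hN
  rw [add_assoc (a + δ), add_halves, halfTurns_add_pi, h₁] at h₂
  omega

theorem exists_eq_add_add_two_pi_mul (a b : ℝ) :
    ∃ (y : ℝ) (j : ℤ), a = b + y + 2 * π * j ∧ |y| ≤ π ∧ circDist a b ≤ |y| := by
  set j := round ((a - b) / (2 * π))
  refine ⟨a - b - 2 * π * j, j, by ring, ?_, ciInf_le ⟨0, ?_⟩ j⟩
  · have h := abs_sub_round ((a - b) / (2 * π))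
    rw [show a - b - 2 * π * j = 2 * π * ((a - b) / (2 * π) - j) by field_simp, abs_mul,
      abs_of_pos Real.two_pi_pos]
    nlinarith [Real.pi_pos]
  · rintro _ ⟨k, rfl⟩
    positivity

theorem exists_not_sameQuadrant {α γ δ : ℝ} {N : ℕ} (hN : π / 2 ≤ N * δ)
    (hδ : δ ≤ circDist α γ) :
    ∃ k < N, ¬SameQuadrant (α + (k + 1) * δ) (γ + (k + 1) * δ) := by
  have hδ₀ : 0 ≤ δ := (pos_of_mul_pos_right (by linarith [Real.pi_pos]) N.cast_nonneg).le
  obtain ⟨y, j, hαγ, hyπ, hy⟩ := exists_eq_add_add_two_pi_mul α γ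
  replace hy := hδ.trans hy
  clear hδ
  wlog hy₀ : 0 ≤ y generalizing α γ y j
  · obtain ⟨k, hk, hne⟩ := this (α := γ) (γ := α) (-y) (-j) (by push_cast; linarith)
      (by rwa [abs_neg]) (by rwa [abs_neg]) (by linarith)
    exact ⟨k, hk, fun h => hne h.symm⟩
  rw [abs_of_nonneg hy₀] at hyπ hy
  obtain ⟨k, hk, hne⟩ := exists_not_sameQuadrant_add (a := γ) hδ₀ hy hyπ hN
  refine ⟨k, hk, fun h => hne ?_⟩
  rwa [hαγ, add_right_comm _ (2 * π * (j : ℝ)), sameQuadrant_add_two_pi_mul_iff,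
    add_right_comm γ y] at h

theorem mul_ofReal_mul_exp (h : ℂ) (r θ : ℝ) :
    h * (r * exp (I * θ)) = ↑(‖h‖ * r) * exp (↑(arg h + θ) * I) := by
  conv_lhs => rw [← norm_mul_exp_arg_mul_I h]
  push_cast
  rw [add_mul, Complex.exp_add]
  ring_nf

theorem sameQuadrant_of_q_eq {R S ψ φ : ℝ} (hR : 0 < R) (hS : 0 < S)
    (hz : offAxis (R * exp (ψ * I))) (hw : offAxis (S * exp (φ * I)))
    (h : q (R * exp (ψ * I)) = q (S * exp (φ * I))) : SameQuadrant ψ φ := by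
  simp only [offAxis, q, re_ofReal_mul, im_ofReal_mul, exp_ofReal_mul_I_re, exp_ofReal_mul_I_im,
    Prod.mk.injEq] at hz hw h
  have hpos {c d : ℝ} (hcd : Real.sign (R * c) = Real.sign (S * d)) : 0 < c ↔ 0 < d := by
    rw [← mul_pos_iff_of_pos_left hR, ← Real.sign_pos_iff, hcd, Real.sign_pos_iff,
      mul_pos_iff_of_pos_left hS]
  constructor
  · rw [← sin_pos_iff_even_halfTurns (right_ne_zero_of_mul hz.2),
      ← sin_pos_iff_even_halfTurns (right_ne_zero_of_mul hw.2)]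
    exact hpos h.2
  · rw [← cos_pos_iff_even_halfTurns (right_ne_zero_of_mul hz.1),
      ← cos_pos_iff_even_halfTurns (right_ne_zero_of_mul hw.1)]
    exact hpos h.1

theorem pairwise_distinguishable_general (M N : ℕ)
    (hu hv : Fin M → ℂ) (hu0 : ∀ m, hu m ≠ 0) (hv0 : ∀ m, hv m ≠ 0)
    (β : ℝ)
    (hβ : IsGreatest
      (Set.range fun m : Fin M => circDist (Complex.arg (hu m)) (Complex.arg (hv m))) β)
    (hβ0 : 0 < β)
    (hNβ : Real.pi / (2 * β) ≤ (N : ℝ))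
    (x : Fin N → ℂ) (hx : IsUniformPhasePilot N x)
    (hoff : ∀ (m : Fin M) (k : Fin N), offAxis (hu m * x k) ∧ offAxis (hv m * x k)) :
    ∃ (m : Fin M) (k : Fin N), q (hu m * x k) ≠ q (hv m * x k) := by
  obtain ⟨r, hr, hx⟩ := hx
  obtain ⟨m, hm : circDist _ _ = β⟩ := hβ.1
  have hN : (0 : ℝ) < N := lt_of_lt_of_le (by positivity) hNβ
  have hNδ : π / 2 ≤ N * (π / (2 * N)) := (by field_simp : (N : ℝ) * (π / (2 * N)) = π / 2).ge
  set δ := π / (2 * N)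
  have hδβ : δ ≤ circDist (arg (hu m)) (arg (hv m)) := by
    rw [hm, div_le_iff₀ (by positivity)]
    rw [div_le_iff₀ (by positivity)] at hNβ
    linarith
  obtain ⟨k, hk, hne⟩ := exists_not_sameQuadrant hNδ hδβ
  refine ⟨m, ⟨k, hk⟩, fun hq => hne ?_⟩
  have hθ : ((k : ℝ) + 1) * π / (2 * N) = (k + 1) * δ := mul_div_assoc _ _ _
  have hoff := hoff m ⟨k, hk⟩
  simp only [hx, mul_ofReal_mul_exp, hθ] at hq hoff
  have hR (h : ℂ) (h0 : h ≠ 0) : 0 < ‖h‖ * r ⟨k, hk⟩ := mul_pos (norm_pos_iff.2 h0) (hr _)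
  exact sameQuadrant_of_q_eq (hR _ (hu0 m)) (hR _ (hv0 m)) hoff.1 hoff.2 hq

/-- Pairwise distinguishability under the designed pilot (core of Proposition 1):
if `β` is the maximum per-antenna circular angular distance between the two channels,
`β > 0`, and `N ≥ π/(2β)`, then the quantized measurement matrices differ. -/
theorem pairwise_distinguishable (M N : ℕ) (hM : 1 ≤ M) (hN : 1 ≤ N)
    (hu hv : Fin M → ℂ) (hu0 : ∀ m, hu m ≠ 0) (hv0 : ∀ m, hv m ≠ 0)
    (β : ℝ)
    (hβ : IsGreatest
      (Set.range fun m : Fin M => circDist (Complex.arg (hu m)) (Complex.arg (hv m))) β)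
    (hβ0 : 0 < β)
    (hNβ : Real.pi / (2 * β) ≤ (N : ℝ))
    (x : Fin N → ℂ) (hx : IsUniformPhasePilot N x)
    (hoff : ∀ (m : Fin M) (k : Fin N), offAxis (hu m * x k) ∧ offAxis (hv m * x k)) :
    ∃ (m : Fin M) (k : Fin N), q (hu m * x k) ≠ q (hv m * x k) :=
  pairwise_distinguishable_general M N hu hv hu0 hv0 β hβ hβ0 hNβ x hx hoff
end

section
/- Proposition 1 (existence of the quantized-measurements-to-channel mapping): let M, N ≥ 1 and let S be a finite set of channels h : Fin M → ℂ, each with all entries nonzero. Define α = min over all pairs of distinct h_u, h_v ∈ S of (max over m ∈ Fin M of the circular distance modulo 2π between arg(h_u m) and arg(h_v m)), and assume α > 0. Let x : Fin N → ℂ be a uniform-phase pilot sequence of length N with N ≥ π/(2α), and assume that h m · x k is off-axis for every h ∈ S, m ∈ Fin M, k ∈ Fin N. Then the map sending h ∈ S to its quantized measurement matrix (m, k) ↦ q(h m · x k) is injective on S; in particular a mapping Φ from quantized measurement matrices back to channels exists. -/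
/-!
If two channels produce the same quantized matrix, then at every antenna the phases
`a = arg (h_u m)` and `b = arg (h_v m)`, both rotated by the pilot phases `kδ` (`δ = π/(2N)`,
`k = 1, …, N`), fall in the same open quadrant. As `cos ψ = sin (ψ + π/2)` and `Nδ = π/2`, this
says that `sin (a + kδ)` and `sin (b + kδ)` have the same sign for the `2N` consecutive values
`k = 1, …, 2N`, i.e. `(⌊a/δ⌋ + k) / 2N` and `(⌊b/δ⌋ + k) / 2N` have the same parity. Over a full
window of `2N` shifts this forces `⌊a/δ⌋ ≡ ⌊b/δ⌋ (mod 4N)`, so `a` and `b` are within `δ` of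
each other modulo `4Nδ = 2π`. Every antenna then has circular distance `< δ ≤ α`, contradicting
the minimality of `α`.
-/

open Real Complex

lemma Real.sign_mul_of_pos {c : ℝ} (hc : 0 < c) (r : ℝ) : Real.sign (c * r) = Real.sign r := by
  rcases lt_trichotomy r 0 with hr | rfl | hr
  · rw [Real.sign_of_neg (mul_neg_of_pos_of_neg hc hr), Real.sign_of_neg hr]
  · rw [mul_zero]
  · rw [Real.sign_of_pos (mul_pos hc hr), Real.sign_of_pos hr]

lemma q_ofReal_mul {c : ℝ} (hc : 0 < c) (w : ℂ) : q (c * w) = q w := by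
  simp only [q, re_ofReal_mul, im_ofReal_mul, Real.sign_mul_of_pos hc]

lemma offAxis_ofReal_mul_iff {c : ℝ} (hc : c ≠ 0) (w : ℂ) : offAxis (c * w) ↔ offAxis w := by
  simp only [offAxis, re_ofReal_mul, im_ofReal_mul, ne_eq, mul_eq_zero, hc, false_or]

lemma offAxis.ne_zero {z : ℂ} (hz : offAxis z) : z ≠ 0 := fun h => hz.1 (by rw [h, zero_re])

lemma q_exp_mul_I (ψ : ℝ) : q (exp (ψ * I)) = (Real.sign (Real.cos ψ), Real.sign (Real.sin ψ)) := by
  rw [q, exp_ofReal_mul_I_re, exp_ofReal_mul_I_im]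

lemma offAxis_exp_mul_I_iff (ψ : ℝ) : offAxis (exp (ψ * I)) ↔ Real.cos ψ ≠ 0 ∧ Real.sin ψ ≠ 0 := by
  rw [offAxis, exp_ofReal_mul_I_re, exp_ofReal_mul_I_im]

lemma mul_ofReal_mul_exp_I_mul (z : ℂ) (ρ θ : ℝ) :
    z * (ρ * exp (I * θ)) = ((‖z‖ * ρ : ℝ) : ℂ) * exp ((arg z + θ : ℝ) * I) := by
  conv_lhs => rw [← norm_mul_exp_arg_mul_I z]
  rw [ofReal_add, add_mul, Complex.exp_add, mul_comm I]
  push_cast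
  ring

lemma Real.sign_sin_eq_ite {t : ℝ} (ht : Real.sin t ≠ 0) :
    Real.sign (Real.sin t) = if Even ⌊t / π⌋ then 1 else -1 := by
  set m := ⌊t / π⌋
  have hm : m * π ≤ t := (le_div_iff₀ pi_pos).1 (Int.floor_le _)
  have hm' : t < (m + 1) * π := (div_lt_iff₀ pi_pos).1 (Int.lt_floor_add_one _)
  have hsin : Real.sin t = (-1) ^ m * Real.sin (t - m * π) := by
    rw [← Real.sin_add_int_mul_pi, sub_add_cancel]
  have hpos : 0 < Real.sin (t - m * π) := by
    refine (Real.sin_nonneg_of_nonneg_of_le_pi (by linarith) (by linarith)).lt_of_ne' ?_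
    intro h0
    rw [hsin, h0, mul_zero] at ht
    exact ht rfl
  rw [hsin, neg_one_zpow_eq_ite]
  split_ifs
  · rw [one_mul, Real.sign_of_pos hpos]
  · rw [neg_one_mul, Real.sign_of_neg (neg_neg_of_pos hpos)]

lemma even_floor_div_pi_iff_of_sign_sin_eq {s t : ℝ} (hs : Real.sin s ≠ 0)
    (h : Real.sign (Real.sin s) = Real.sign (Real.sin t)) : Even ⌊s / π⌋ ↔ Even ⌊t / π⌋ := by
  have ht : Real.sin t ≠ 0 := fun h0 =>
    hs (Real.sign_eq_zero_iff.1 (h.trans (by rw [h0, Real.sign_zero])))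
  rw [Real.sign_sin_eq_ite hs, Real.sign_sin_eq_ite ht] at h
  split_ifs at h <;> first | tauto | norm_num at h

lemma floor_add_mul_div_pi (a : ℝ) {P : ℕ} (hP : 0 < P) (k : ℤ) :
    ⌊(a + k * (π / P)) / π⌋ = (⌊a / (π / P)⌋ + k) / P := by
  have hP' : (P : ℝ) ≠ 0 := by positivity
  have : (a + k * (π / P)) / π = (a / (π / P) + k) / P := by
    field_simp [pi_ne_zero]
  rw [this, Int.floor_div_natCast, Int.floor_add_intCast]

lemma Int.mul_add_add_ediv {P r k : ℤ} (q : ℤ) (hP : 0 < P) (hr : 0 ≤ r) (hk : 0 ≤ k)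
    (hrk : r + k < 2 * P) : (P * q + r + k) / P = q + if r + k < P then 0 else 1 := by
  split_ifs with h
  · rw [show P * q + r + k = r + k + P * q by ring, Int.add_mul_ediv_left _ _ hP.ne',
      Int.ediv_eq_zero_of_lt (by omega) h, zero_add, add_zero]
  · rw [show P * q + r + k = r + k - P + P * (q + 1) by ring, Int.add_mul_ediv_left _ _ hP.ne',
      Int.ediv_eq_zero_of_lt (by omega) (by omega), zero_add]

/-- The parity of `(i + k) / P` flips exactly once as `k` runs through `1, …, P`, at
`k = P - i % P`; so the parities over that window determine `i % P` and then `i / P` mod `2`. -/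
lemma two_mul_dvd_sub_of_even_ediv_iff {P i i' : ℤ} (hP : 0 < P)
    (h : ∀ k, 1 ≤ k → k ≤ P → (Even ((i + k) / P) ↔ Even ((i' + k) / P))) : 2 * P ∣ i - i' := by
  have hdiv : ∀ n : ℤ, ∃ q r, 0 ≤ r ∧ r < P ∧ n = P * q + r := fun n =>
    ⟨n / P, n % P, Int.emod_nonneg _ hP.ne', Int.emod_lt_of_pos _ hP, (Int.mul_ediv_add_emod n P).symm⟩
  obtain ⟨q, r, hr, hrP, rfl⟩ := hdiv i
  obtain ⟨q', r', hr', hrP', rfl⟩ := hdiv i'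
  have hwindow : ∀ k, 1 ≤ k → k ≤ P →
      ((q + if r + k < P then 0 else 1) % 2 = 0 ↔ (q' + if r' + k < P then 0 else 1) % 2 = 0) := by
    intro k hk hkP
    have := h k hk hkP
    rwa [Int.mul_add_add_ediv q hP hr (by omega) (by omega),
      Int.mul_add_add_ediv q' hP hr' (by omega) (by omega), Int.even_iff, Int.even_iff] at this
  obtain rfl : r = r' := by
    have h₁ := hwindow (P - r) (by omega) (by omega)
    have h₂ := hwindow (P - r') (by omega) (by omega)
    split_ifs at h₁ h₂ <;> omega
  obtain ⟨t, ht⟩ : 2 ∣ q - q' := by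
    have hP := hwindow P (by omega) le_rfl
    split_ifs at hP <;> omega
  exact ⟨t, by linear_combination P * ht⟩

lemma exists_abs_sub_sub_lt_of_sign_sin_eq {P : ℕ} (hP : 0 < P) {a b : ℝ}
    (h : ∀ k : ℤ, 1 ≤ k → k ≤ P → Real.sin (a + k * (π / P)) ≠ 0 ∧
      Real.sign (Real.sin (a + k * (π / P))) = Real.sign (Real.sin (b + k * (π / P)))) :
    ∃ j : ℤ, |a - b - 2 * π * j| < π / P := by
  set δ := π / P with hδ
  have hδ0 : 0 < δ := by positivity
  set i := ⌊a / δ⌋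
  set i' := ⌊b / δ⌋
  obtain ⟨j, hj⟩ : 2 * (P : ℤ) ∣ i - i' := by
    refine two_mul_dvd_sub_of_even_ediv_iff (by exact_mod_cast hP) fun k hk hkP => ?_
    rw [← floor_add_mul_div_pi a hP, ← floor_add_mul_div_pi b hP]
    exact even_floor_div_pi_iff_of_sign_sin_eq (h k hk hkP).1 (h k hk hkP).2
  have hperiod : 2 * π * j = (i - i') * δ := by
    have hj' : (i : ℝ) - i' = 2 * P * j := by exact_mod_cast hj
    rw [hj', hδ]
    field_simp
  have ha : i * δ ≤ a := (le_div_iff₀ hδ0).1 (Int.floor_le _)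
  have ha' : a < (i + 1) * δ := (div_lt_iff₀ hδ0).1 (Int.lt_floor_add_one _)
  have hb : i' * δ ≤ b := (le_div_iff₀ hδ0).1 (Int.floor_le _)
  have hb' : b < (i' + 1) * δ := (div_lt_iff₀ hδ0).1 (Int.lt_floor_add_one _)
  refine ⟨j, abs_lt.2 ⟨?_, ?_⟩⟩ <;> linarith

lemma circDist_le (a b : ℝ) (j : ℤ) : circDist a b ≤ |a - b - 2 * π * j| :=
  ciInf_le ⟨0, by rintro _ ⟨j, rfl⟩; positivity⟩ j

noncomputable def pilotPhase (N k : ℕ) : ℝ := ((k : ℝ) + 1) * π / (2 * N)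

lemma circDist_lt_of_q_exp_eq {N : ℕ} (hN : 0 < N) {a b : ℝ}
    (h : ∀ k : Fin N, offAxis (exp ((a + pilotPhase N k : ℝ) * I)) ∧
      q (exp ((a + pilotPhase N k : ℝ) * I)) = q (exp ((b + pilotPhase N k : ℝ) * I))) :
    circDist a b < π / (2 * N) := by
  simp only [offAxis_exp_mul_I_iff, q_exp_mul_I, Prod.mk.injEq] at h
  have hphase : ∀ j : ℤ, ∀ (hj₀ : 0 ≤ j) (hjN : j < N),
      pilotPhase N (⟨j.toNat, by omega⟩ : Fin N) = ((j + 1 : ℤ) : ℝ) * (π / (2 * N : ℕ)) := by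
    intro j hj₀ _
    have hcast : ((j.toNat : ℕ) : ℝ) = j := by exact_mod_cast Int.toNat_of_nonneg hj₀
    simp only [pilotPhase, hcast]
    push_cast
    ring
  have hsin : ∀ k : ℤ, 1 ≤ k → k ≤ (2 * N : ℕ) →
      Real.sin (a + k * (π / (2 * N : ℕ))) ≠ 0 ∧ Real.sign (Real.sin (a + k * (π / (2 * N : ℕ))))
        = Real.sign (Real.sin (b + k * (π / (2 * N : ℕ)))) := by
    intro k hk hk2N
    rcases le_or_gt k N with hkN | hkN
    · obtain ⟨⟨-, hs⟩, -, hss⟩ := h ⟨(k - 1).toNat, by omega⟩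
      rw [hphase (k - 1) (by omega) (by omega), sub_add_cancel] at hs hss
      exact ⟨hs, hss⟩
    · -- the cosine at the phase of index `k - N - 1` is the sine at `k`, since `Nδ = π/2`
      obtain ⟨⟨hc, -⟩, hcc, -⟩ := h ⟨(k - N - 1).toNat, by omega⟩
      have hshift : ∀ c : ℝ,
          c + k * (π / (2 * N : ℕ)) = c + ((k - N : ℤ) : ℝ) * (π / (2 * N : ℕ)) + π / 2 := by
        intro c
        push_cast
        field_simp
        ring
      rw [hphase (k - N - 1) (by omega) (by omega), sub_add_cancel] at hc hcc
      rw [hshift a, hshift b, Real.sin_add_pi_div_two, Real.sin_add_pi_div_two]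
      exact ⟨hc, hcc⟩
  obtain ⟨j, hj⟩ := exists_abs_sub_sub_lt_of_sign_sin_eq (by omega) hsin
  push_cast at hj
  exact (circDist_le a b j).trans_lt hj

lemma circDist_arg_lt_of_q_mul_pilot_eq {N : ℕ} (hN : 0 < N) {x : Fin N → ℂ}
    (hx : IsUniformPhasePilot N x) {z w : ℂ} (hz : ∀ k, offAxis (z * x k))
    (hw : ∀ k, offAxis (w * x k)) (hzw : ∀ k, q (z * x k) = q (w * x k)) :
    circDist (arg z) (arg w) < π / (2 * N) := by
  obtain ⟨r, hr, hxr⟩ := hx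
  have hpolar : ∀ u : ℂ, (∀ k, offAxis (u * x k)) → ∀ k : Fin N,
      ∃ c : ℝ, 0 < c ∧ u * x k = (c : ℂ) * exp ((arg u + pilotPhase N k : ℝ) * I) := fun u hu k =>
    ⟨‖u‖ * r k, mul_pos (norm_pos_iff.2 (left_ne_zero_of_mul (hu k).ne_zero)) (hr k),
      by rw [hxr k]; exact mul_ofReal_mul_exp_I_mul u _ _⟩
  refine circDist_lt_of_q_exp_eq hN fun k => ?_
  obtain ⟨c, hc, hzk⟩ := hpolar z hz k
  obtain ⟨c', hc', hwk⟩ := hpolar w hw k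
  have hoff := hz k
  have hq := hzw k
  rw [hzk, offAxis_ofReal_mul_iff hc.ne'] at hoff
  rw [hzk, hwk, q_ofReal_mul hc, q_ofReal_mul hc'] at hq
  exact ⟨hoff, hq⟩

theorem quantized_measurements_to_channel_mapping_exists_general
    (M N : ℕ) (hM : 1 ≤ M) (hN : 1 ≤ N)
    (S : Finset (Fin M → ℂ))
    (α : ℝ)
    (hα : IsLeast {b : ℝ | ∃ hu ∈ S, ∃ hv ∈ S, hu ≠ hv ∧
      b = Finset.univ.sup' (Finset.univ_nonempty_iff.mpr ⟨⟨0, hM⟩⟩)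
        (fun m : Fin M => circDist (Complex.arg (hu m)) (Complex.arg (hv m)))} α)
    (hα0 : 0 < α)
    (x : Fin N → ℂ) (hx : IsUniformPhasePilot N x)
    (hNα : Real.pi / (2 * α) ≤ (N : ℝ))
    (hoff : ∀ h ∈ S, ∀ (m : Fin M) (k : Fin N), offAxis (h m * x k)) :
    Set.InjOn (fun h : Fin M → ℂ => fun mk : Fin M × Fin N => q (h mk.1 * x mk.2))
      (S : Set (Fin M → ℂ)) := by
  intro hu huS hv hvS heq
  by_contra hne
  have hδα : π / (2 * N) ≤ α := by
    rw [div_le_iff₀ (by positivity)] at hNα ⊢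
    linarith
  have hle := hα.2 ⟨hu, huS, hv, hvS, hne, rfl⟩
  refine hle.not_gt ((Finset.sup'_lt_iff _).2 fun m _ => ?_)
  exact (circDist_arg_lt_of_q_mul_pilot_eq hN hx (hoff hu huS m) (hoff hv hvS m)
    fun k => congrFun heq (m, k)).trans_le hδα

/-- Proposition 1: with `α` the minimum over distinct channel pairs of the maximum
per-antenna circular angular distance, `α > 0`, and a uniform-phase pilot of length
`N ≥ π/(2α)`, the map from channels to quantized measurement matrices is injective on the
candidate set `S`; hence the mapping `Φ` from measurements to channels exists. -/
theorem quantized_measurements_to_channel_mapping_exists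
    (M N : ℕ) (hM : 1 ≤ M) (hN : 1 ≤ N)
    (S : Finset (Fin M → ℂ)) (hS0 : ∀ h ∈ S, ∀ m, h m ≠ 0)
    (α : ℝ)
    (hα : IsLeast {b : ℝ | ∃ hu ∈ S, ∃ hv ∈ S, hu ≠ hv ∧
      b = Finset.univ.sup' (Finset.univ_nonempty_iff.mpr ⟨⟨0, hM⟩⟩)
        (fun m : Fin M => circDist (Complex.arg (hu m)) (Complex.arg (hv m)))} α)
    (hα0 : 0 < α)
    (x : Fin N → ℂ) (hx : IsUniformPhasePilot N x)
    (hNα : Real.pi / (2 * α) ≤ (N : ℝ))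
    (hoff : ∀ h ∈ S, ∀ (m : Fin M) (k : Fin N), offAxis (h m * x k)) :
    Set.InjOn (fun h : Fin M → ℂ => fun mk : Fin M × Fin N => q (h mk.1 * x mk.2))
      (S : Set (Fin M → ℂ)) :=
  quantized_measurements_to_channel_mapping_exists_general M N hM hN S α hα hα0 x hx hNα hoff
end
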